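/- arXiv:2501.05737 — 2 statements merged into one kernel-verified Lean document; each statement's English description precedes it below -/
import Mathlib

section
/- Optimality gap of VRA-DSGT (Lemma 3.8): under the stated assumptions, for every k ≥ 1 and any two positive scalars ε₁, ε₂ the VRA-DSGT iterates satisfy E‖x̄_{k+1} − x*‖² ≤ (1 − μα_k + γ_k/ε₁ + α_k/ε₂ + 8L_ξ²α_k²)·E‖x̄_k − x*‖² + ((3α_kε₂ + 8α_k²)·L_ξ²/n)·E‖x_k − 𝐱̄_k‖² + ((3α_kε₂ + 8α_k²)/n)·E‖e^q_k‖² + (γ²(3α_kε₂ + 8α_k²)/n)·E‖e^s_k‖² + ((ε₁γ_k + 2γ_k²)/n)·E‖e^x_k‖². -/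
open MeasureTheory Finset
open scoped RealInnerProductSpace

noncomputable section

variable {n d : ℕ}

/-- Row average `Ā = (1/n) ∑ᵢ aᵢ` of an `n × d` matrix given by its rows. -/
def rowAvg (A : Fin n → EuclideanSpace ℝ (Fin d)) : EuclideanSpace ℝ (Fin d) :=
  (n : ℝ)⁻¹ • ∑ i, A i

/-- Squared Frobenius norm `‖A‖²` of a matrix given by its rows. -/
def fro2 (A : Fin n → EuclideanSpace ℝ (Fin d)) : ℝ := ∑ i, ‖A i‖ ^ 2

/-- Squared Frobenius norm `‖A − 𝟏·Āᵀ‖²` of the deviation from consensus. -/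
def dev2 (A : Fin n → EuclideanSpace ℝ (Fin d)) : ℝ := ∑ i, ‖A i - rowAvg A‖ ^ 2

/-- Squared Frobenius norm of an `n × n` weight matrix. -/
def mFro2 (M : Matrix (Fin n) (Fin n) ℝ) : ℝ := ∑ i, ∑ j, (M i j) ^ 2

/-- The mixed weight matrix `W_c = (1−c)·I + c·W`. -/
def mixW (W : Matrix (Fin n) (Fin n) ℝ) (c : ℝ) : Matrix (Fin n) (Fin n) ℝ :=
  (1 - c) • (1 : Matrix (Fin n) (Fin n) ℝ) + c • W

/-- Multiplication of an `n × d` matrix (given by rows) by an `n × n` matrix. -/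
def wmul (M : Matrix (Fin n) (Fin n) ℝ) (A : Fin n → EuclideanSpace ℝ (Fin d)) :
    Fin n → EuclideanSpace ℝ (Fin d) := fun i => ∑ j, M i j • A j

/-- `W` with its diagonal set to zero. -/
def offdiag (W : Matrix (Fin n) (Fin n) ℝ) : Matrix (Fin n) (Fin n) ℝ :=
  Matrix.of fun i j => if i = j then (0 : ℝ) else W i j

/-- The global objective `f = (1/n) ∑ᵢ fᵢ`. -/
def fglob (f : Fin n → EuclideanSpace ℝ (Fin d) → ℝ) :
    EuclideanSpace ℝ (Fin d) → ℝ := fun z => (n : ℝ)⁻¹ * ∑ i, f i z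

/-- The matrix of local gradients `g_k`, whose `i`-th row is `∇fᵢ(x_{i,k})`. -/
def gmat (f : Fin n → EuclideanSpace ℝ (Fin d) → ℝ)
    (A : Fin n → EuclideanSpace ℝ (Fin d)) : Fin n → EuclideanSpace ℝ (Fin d) :=
  fun i => gradient (f i) (A i)


/-- The hybrid variance-reduction error matrix `e^q = q − g`, whose `i`-th row is
`q_i − ∇fᵢ(x_i)`. -/
def eqerr (f : Fin n → EuclideanSpace ℝ (Fin d) → ℝ)
    (Q A : Fin n → EuclideanSpace ℝ (Fin d)) : Fin n → EuclideanSpace ℝ (Fin d) :=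
  fun i => Q i - gradient (f i) (A i)

section AuxLemmas
set_option maxHeartbeats 2000000

lemma rowAvg_add (A B : Fin n → EuclideanSpace ℝ (Fin d)) :
    rowAvg (fun i => A i + B i) = rowAvg A + rowAvg B := by
  simp [rowAvg, Finset.sum_add_distrib, smul_add]

lemma rowAvg_sub (A B : Fin n → EuclideanSpace ℝ (Fin d)) :
    rowAvg (fun i => A i - B i) = rowAvg A - rowAvg B := by
  simp [rowAvg, Finset.sum_sub_distrib, smul_sub]

lemma rowAvg_smul (c : ℝ) (A : Fin n → EuclideanSpace ℝ (Fin d)) :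
    rowAvg (fun i => c • A i) = c • rowAvg A := by
  simp [rowAvg, ← Finset.smul_sum, smul_comm c]

lemma mixW_col (W : Matrix (Fin n) (Fin n) ℝ)
    (hWcol : ∀ j, ∑ i, W i j = 1) (c : ℝ) (j : Fin n) :
    ∑ i, mixW W c i j = 1 := by
  simp only [mixW, Matrix.add_apply, Matrix.smul_apply, Matrix.one_apply, smul_eq_mul,
    Finset.sum_add_distrib, mul_ite, mul_one, mul_zero]
  rw [Finset.sum_ite_eq' univ j, ← Finset.mul_sum, hWcol j]
  simp

lemma rowAvg_wmul (M : Matrix (Fin n) (Fin n) ℝ) (hcol : ∀ j, ∑ i, M i j = 1)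
    (A : Fin n → EuclideanSpace ℝ (Fin d)) :
    rowAvg (wmul M A) = rowAvg A := by
  unfold rowAvg wmul
  congr 1
  rw [Finset.sum_comm]
  refine Finset.sum_congr rfl fun j _ => ?_
  rw [← Finset.sum_smul, hcol j, one_smul]

lemma normsq_rowAvg_le (hn : 0 < n) (v : Fin n → EuclideanSpace ℝ (Fin d)) :
    ‖rowAvg v‖^2 ≤ (n:ℝ)⁻¹ * fro2 v := by
  have hn' : (0:ℝ) < n := by exact_mod_cast hn
  have h1 : ‖∑ i, v i‖ ≤ ∑ i, ‖v i‖ := norm_sum_le _ _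
  have h2 : (∑ i, ‖v i‖)^2 ≤ (n:ℝ) * ∑ i, ‖v i‖^2 := by
    simpa using sq_sum_le_card_mul_sum_sq (s := (univ : Finset (Fin n))) (f := fun i => ‖v i‖)
  have h3 : ‖rowAvg v‖ = (n:ℝ)⁻¹ * ‖∑ i, v i‖ := by
    rw [rowAvg, norm_smul, Real.norm_eq_abs, abs_of_pos (by positivity)]
  rw [h3, mul_pow, fro2]
  have h4 : ‖∑ i, v i‖^2 ≤ (n:ℝ) * ∑ i, ‖v i‖^2 :=
    le_trans (pow_le_pow_left₀ (norm_nonneg _) h1 2) h2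
  have h5 := mul_le_mul_of_nonneg_left h4 (by positivity : (0:ℝ) ≤ ((n:ℝ)⁻¹)^2)
  refine h5.trans_eq ?_
  field_simp

lemma grad_fglob (f : Fin n → EuclideanSpace ℝ (Fin d) → ℝ)
    (hdiff : ∀ i, Differentiable ℝ (f i)) (z : EuclideanSpace ℝ (Fin d)) :
    gradient (fglob f) z = (n:ℝ)⁻¹ • ∑ i, gradient (f i) z := by
  unfold fglob gradient
  rw [fderiv_const_mul (DifferentiableAt.fun_sum fun i _ => (hdiff i).differentiableAt) ((n:ℝ)⁻¹)]
  rw [fderiv_fun_sum fun i _ => (hdiff i).differentiableAt]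
  simp [_root_.map_smul, map_sum]

lemma key_ineq (D B G Δ : EuclideanSpace ℝ (Fin d)) (αk γkk ε₁ ε₂ μs Lξ : ℝ)
    (hα : 0 < αk) (hγk : 0 < γkk) (hε₁ : 0 < ε₁) (hε₂ : 0 < ε₂) (hμ : 0 < μs)
    (hDG : μs * ‖D‖^2 ≤ ⟪G, D⟫) (hG : ‖G‖^2 ≤ Lξ^2 * ‖D‖^2) :
    ‖D + γkk • B - αk • (G + Δ)‖^2
      ≤ (1 - μs*αk + γkk/ε₁ + αk/ε₂ + 8*Lξ^2*αk^2) * ‖D‖^2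
        + (αk*ε₂ + 8/3*αk^2) * ‖Δ‖^2 + (ε₁*γkk + 2*γkk^2) * ‖B‖^2 := by
  set v := γkk • B - αk • (G + Δ) with hv
  have hDv : D + γkk • B - αk • (G + Δ) = D + v := by rw [hv]; abel
  have hexp : ‖D + v‖^2 = ‖D‖^2 + 2*⟪D,v⟫ + ‖v‖^2 := norm_add_sq_real D v
  have hinner : ⟪D,v⟫ = γkk*⟪D,B⟫ - αk*⟪G,D⟫ - αk*⟪D,Δ⟫ := by
    simp only [hv, inner_sub_right, inner_add_right, real_inner_smul_right,
      real_inner_comm D G]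
    ring
  have hvn : ‖v‖ ≤ γkk*‖B‖ + αk*(‖G‖+‖Δ‖) := by
    have h1 : ‖v‖ ≤ ‖γkk • B‖ + ‖αk • (G+Δ)‖ := norm_sub_le _ _
    rw [norm_smul, norm_smul, Real.norm_eq_abs, Real.norm_eq_abs,
      abs_of_pos hγk, abs_of_pos hα] at h1
    exact h1.trans (add_le_add_right
      (mul_le_mul_of_nonneg_left (norm_add_le _ _) hα.le) _)
  have hv2 : ‖v‖^2 ≤ (γkk*‖B‖ + αk*(‖G‖+‖Δ‖))^2 := pow_le_pow_left₀ (norm_nonneg v) hvn 2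
  have hv3 : ‖v‖^2 ≤ 2*γkk^2*‖B‖^2 + 8*αk^2*‖G‖^2 + (8/3)*αk^2*‖Δ‖^2 := by
    nlinarith [hv2, sq_nonneg (γkk*‖B‖ - αk*(‖G‖+‖Δ‖)),
      mul_nonneg (sq_nonneg αk) (sq_nonneg (3*‖G‖ - ‖Δ‖))]
  have hg8 : 8*αk^2*‖G‖^2 ≤ 8*Lξ^2*αk^2*‖D‖^2 := by
    nlinarith [mul_nonneg (sq_nonneg αk) (sub_nonneg.2 hG)]
  have hDB : ⟪D,B⟫ ≤ ‖D‖*‖B‖ := real_inner_le_norm D B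
  have hDΔ : -⟪D,Δ⟫ ≤ ‖D‖*‖Δ‖ := by
    have h := real_inner_le_norm D (-Δ)
    simpa [inner_neg_right] using h
  have hDB2 : γkk*⟪D,B⟫ ≤ γkk*(‖D‖*‖B‖) := mul_le_mul_of_nonneg_left hDB hγk.le
  have hDΔ2 : αk*(-⟪D,Δ⟫) ≤ αk*(‖D‖*‖Δ‖) := mul_le_mul_of_nonneg_left hDΔ hα.le
  have hGD2 : αk*(μs*‖D‖^2) ≤ αk*⟪G,D⟫ := mul_le_mul_of_nonneg_left hDG hα.le
  have hnn : 0 ≤ μs*(αk*‖D‖^2) := by positivity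
  have y1 : (γkk/ε₁)*‖D‖^2 + (ε₁*γkk)*‖B‖^2 - 2*γkk*(‖D‖*‖B‖)
      = (γkk/ε₁)*(‖D‖ - ε₁*‖B‖)^2 := by field_simp; ring
  have y2 : (αk/ε₂)*‖D‖^2 + (αk*ε₂)*‖Δ‖^2 - 2*αk*(‖D‖*‖Δ‖)
      = (αk/ε₂)*(‖D‖ - ε₂*‖Δ‖)^2 := by field_simp; ring
  have y1' : (0:ℝ) ≤ (γkk/ε₁)*(‖D‖ - ε₁*‖B‖)^2 := by positivity
  have y2' : (0:ℝ) ≤ (αk/ε₂)*(‖D‖ - ε₂*‖Δ‖)^2 := by positivity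
  rw [hDv, hexp, hinner]
  linarith [hv3, hg8, hDB2, hDΔ2, hGD2, hnn, y1, y2, y1', y2']

lemma pointwise_bound (hn : 0 < n)
    (f : Fin n → EuclideanSpace ℝ (Fin d) → ℝ)
    (hdiff : ∀ i, Differentiable ℝ (f i))
    (Lξ μs : ℝ) (xstar : EuclideanSpace ℝ (Fin d))
    (hLip : ∀ i a b, ‖gradient (f i) a - gradient (f i) b‖ ≤ Lξ * ‖a - b‖)
    (hμ : 0 < μs)
    (hsc : ∀ a b, fglob f b ≥
      fglob f a + ⟪gradient (fglob f) a, b - a⟫ + μs / 2 * ‖a - b‖ ^ 2)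
    (hopt : gradient (fglob f) xstar = 0)
    (xk qk ek sk : Fin n → EuclideanSpace ℝ (Fin d))
    (αk γkk γ ε₁ ε₂ : ℝ)
    (hα : 0 < αk) (hγk : 0 < γkk) (hε₁ : 0 < ε₁) (hε₂ : 0 < ε₂)
    (xnext : EuclideanSpace ℝ (Fin d))
    (hid : xnext = rowAvg xk + γkk • rowAvg ek
      - αk • (rowAvg (gmat f xk) + rowAvg (eqerr f qk xk) + γ • rowAvg sk)) :
    ‖xnext - xstar‖^2
      ≤ (1 - μs * αk + γkk / ε₁ + αk / ε₂ + 8 * Lξ ^ 2 * αk ^ 2) * ‖rowAvg xk - xstar‖^2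
        + (3 * αk * ε₂ + 8 * αk ^ 2) * Lξ ^ 2 / n * dev2 xk
        + (3 * αk * ε₂ + 8 * αk ^ 2) / n * fro2 (eqerr f qk xk)
        + γ ^ 2 * (3 * αk * ε₂ + 8 * αk ^ 2) / n * fro2 sk
        + (ε₁ * γkk + 2 * γkk ^ 2) / n * fro2 ek := by
  have hn' : (0:ℝ) < n := by exact_mod_cast hn
  have hn0 : (n:ℝ) ≠ 0 := ne_of_gt hn'
  set X := rowAvg xk with hXdef
  set G := gradient (fglob f) X with hGdef
  set gb := rowAvg (gmat f xk) with hgbdef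
  set Δ := (gb - G) + rowAvg (eqerr f qk xk) + γ • rowAvg sk with hΔdef
  -- the identity
  have hid2 : xnext - xstar = (X - xstar) + γkk • rowAvg ek - αk • (G + Δ) := by
    have h1 : G + Δ = gb + rowAvg (eqerr f qk xk) + γ • rowAvg sk := by
      rw [hΔdef]; abel
    rw [h1, hid, hXdef]; abel
  -- strong convexity inner product bound
  have hDG : μs * ‖X - xstar‖^2 ≤ ⟪G, X - xstar⟫ := by
    have h1 := hsc X xstar
    have h2 := hsc xstar X
    rw [hopt] at h2
    simp only [inner_zero_left] at h2
    have h3 : xstar - X = -(X - xstar) := by abel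
    rw [h3, inner_neg_right] at h1
    rw [h3, norm_neg] at h2
    rw [← hGdef] at h1
    linarith
  -- Lipschitz bound on ‖G‖
  have hGsum : G - gradient (fglob f) xstar
      = (n:ℝ)⁻¹ • ∑ i, (gradient (f i) X - gradient (f i) xstar) := by
    rw [hGdef, grad_fglob f hdiff, grad_fglob f hdiff, ← smul_sub,
      ← Finset.sum_sub_distrib]
  have hGlip : ‖G‖ ≤ Lξ * ‖X - xstar‖ := by
    have h0 : ‖G‖ = ‖(n:ℝ)⁻¹ • ∑ i, (gradient (f i) X - gradient (f i) xstar)‖ := by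
      rw [← hGsum, hopt, sub_zero]
    rw [h0, norm_smul, Real.norm_eq_abs, abs_of_pos (by positivity)]
    calc (n:ℝ)⁻¹ * ‖∑ i, (gradient (f i) X - gradient (f i) xstar)‖
        ≤ (n:ℝ)⁻¹ * ∑ i, ‖gradient (f i) X - gradient (f i) xstar‖ :=
          mul_le_mul_of_nonneg_left (norm_sum_le _ _) (by positivity)
      _ ≤ (n:ℝ)⁻¹ * ∑ _i : Fin n, Lξ * ‖X - xstar‖ :=
          mul_le_mul_of_nonneg_left
            (Finset.sum_le_sum fun i _ => hLip i X xstar) (by positivity)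
      _ = Lξ * ‖X - xstar‖ := by
          rw [Finset.sum_const, card_univ, Fintype.card_fin, nsmul_eq_mul]
          field_simp
  have hG : ‖G‖^2 ≤ Lξ^2 * ‖X - xstar‖^2 := by
    have := pow_le_pow_left₀ (norm_nonneg G) hGlip 2
    calc ‖G‖^2 ≤ (Lξ * ‖X - xstar‖)^2 := this
      _ = Lξ^2 * ‖X - xstar‖^2 := by ring
  -- bound on ‖gb − G‖²
  have hgbG : gb - G = (n:ℝ)⁻¹ • ∑ i, (gradient (f i) (xk i) - gradient (f i) X) := by
    rw [hgbdef, hGdef, grad_fglob f hdiff]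
    simp only [rowAvg, gmat]
    rw [← smul_sub, ← Finset.sum_sub_distrib]
  have hp1 : ‖gb - G‖ ≤ (n:ℝ)⁻¹ * (Lξ * ∑ i, ‖xk i - X‖) := by
    rw [hgbG, norm_smul, Real.norm_eq_abs, abs_of_pos (by positivity)]
    refine mul_le_mul_of_nonneg_left ?_ (by positivity)
    calc ‖∑ i, (gradient (f i) (xk i) - gradient (f i) X)‖
        ≤ ∑ i, ‖gradient (f i) (xk i) - gradient (f i) X‖ := norm_sum_le _ _
      _ ≤ ∑ i, Lξ * ‖xk i - X‖ := Finset.sum_le_sum fun i _ => hLip i _ _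
      _ = Lξ * ∑ i, ‖xk i - X‖ := (Finset.mul_sum _ _ _).symm
  have hT2 : (∑ i, ‖xk i - X‖)^2 ≤ (n:ℝ) * dev2 xk := by
    simpa [dev2, hXdef] using
      sq_sum_le_card_mul_sum_sq (s := (univ : Finset (Fin n))) (f := fun i => ‖xk i - X‖)
  have hp2 : ‖gb - G‖^2 ≤ Lξ^2 / n * dev2 xk := by
    calc ‖gb - G‖^2 ≤ ((n:ℝ)⁻¹ * (Lξ * ∑ i, ‖xk i - X‖))^2 :=
          pow_le_pow_left₀ (norm_nonneg _) hp1 2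
      _ = ((n:ℝ)⁻¹)^2 * Lξ^2 * (∑ i, ‖xk i - X‖)^2 := by ring
      _ ≤ ((n:ℝ)⁻¹)^2 * Lξ^2 * ((n:ℝ) * dev2 xk) :=
          mul_le_mul_of_nonneg_left hT2 (by positivity)
      _ = Lξ^2 / n * dev2 xk := by field_simp
  -- bounds on the averages
  have hq2 : ‖rowAvg (eqerr f qk xk)‖^2 ≤ (n:ℝ)⁻¹ * fro2 (eqerr f qk xk) :=
    normsq_rowAvg_le hn _
  have hr2 : ‖γ • rowAvg sk‖^2 ≤ γ^2 * ((n:ℝ)⁻¹ * fro2 sk) := by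
    rw [norm_smul, Real.norm_eq_abs, mul_pow, sq_abs]
    exact mul_le_mul_of_nonneg_left (normsq_rowAvg_le hn sk) (sq_nonneg γ)
  have hB : ‖rowAvg ek‖^2 ≤ (n:ℝ)⁻¹ * fro2 ek := normsq_rowAvg_le hn _
  -- combine into a bound on ‖Δ‖²
  have hΔn : ‖Δ‖ ≤ ‖gb - G‖ + ‖rowAvg (eqerr f qk xk)‖ + ‖γ • rowAvg sk‖ := by
    rw [hΔdef]; exact norm_add₃_le
  have hΔ2 : ‖Δ‖^2 ≤ 3*(Lξ^2/n * dev2 xk + (n:ℝ)⁻¹ * fro2 (eqerr f qk xk)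
      + γ^2 * ((n:ℝ)⁻¹ * fro2 sk)) := by
    have h := pow_le_pow_left₀ (norm_nonneg Δ) hΔn 2
    nlinarith [hp2, hq2, hr2, h,
      sq_nonneg (‖gb - G‖ - ‖rowAvg (eqerr f qk xk)‖),
      sq_nonneg (‖gb - G‖ - ‖γ • rowAvg sk‖),
      sq_nonneg (‖rowAvg (eqerr f qk xk)‖ - ‖γ • rowAvg sk‖)]
  -- main chain
  have hkey := key_ineq (X - xstar) (rowAvg ek) G Δ αk γkk ε₁ ε₂ μs Lξ
    hα hγk hε₁ hε₂ hμ hDG hG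
  have m1 := mul_le_mul_of_nonneg_left hΔ2
    (show (0:ℝ) ≤ αk*ε₂ + 8/3*αk^2 by positivity)
  have m2 := mul_le_mul_of_nonneg_left hB
    (show (0:ℝ) ≤ ε₁*γkk + 2*γkk^2 by positivity)
  calc ‖xnext - xstar‖^2 = ‖(X - xstar) + γkk • rowAvg ek - αk • (G + Δ)‖^2 := by
        rw [hid2]
    _ ≤ (1 - μs*αk + γkk/ε₁ + αk/ε₂ + 8*Lξ^2*αk^2) * ‖X - xstar‖^2
        + (αk*ε₂ + 8/3*αk^2) * ‖Δ‖^2 + (ε₁*γkk + 2*γkk^2) * ‖rowAvg ek‖^2 := hkey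
    _ ≤ (1 - μs * αk + γkk / ε₁ + αk / ε₂ + 8 * Lξ ^ 2 * αk ^ 2) * ‖X - xstar‖^2
        + (3 * αk * ε₂ + 8 * αk ^ 2) * Lξ ^ 2 / n * dev2 xk
        + (3 * αk * ε₂ + 8 * αk ^ 2) / n * fro2 (eqerr f qk xk)
        + γ ^ 2 * (3 * αk * ε₂ + 8 * αk ^ 2) / n * fro2 sk
        + (ε₁ * γkk + 2 * γkk ^ 2) / n * fro2 ek := by
          have e1 : (αk*ε₂ + 8/3*αk^2) * (3*(Lξ^2/n * dev2 xk
              + (n:ℝ)⁻¹ * fro2 (eqerr f qk xk) + γ^2 * ((n:ℝ)⁻¹ * fro2 sk)))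
            = (3 * αk * ε₂ + 8 * αk ^ 2) * Lξ ^ 2 / n * dev2 xk
              + (3 * αk * ε₂ + 8 * αk ^ 2) / n * fro2 (eqerr f qk xk)
              + γ ^ 2 * (3 * αk * ε₂ + 8 * αk ^ 2) / n * fro2 sk := by
            field_simp
          have e2 : (ε₁*γkk + 2*γkk^2) * ((n:ℝ)⁻¹ * fro2 ek)
              = (ε₁ * γkk + 2 * γkk ^ 2) / n * fro2 ek := by
            field_simp
          linarith [m1, m2, e1, e2]

end AuxLemmas

/-- **Lemma 3.8 (optimality gap of VRA-DSGT).** -/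
theorem vra_dsgt_optimality_gap
    {Ω : Type*} {m0 : MeasurableSpace Ω} (μ : Measure Ω) [IsProbabilityMeasure μ]
    (hn : 0 < n) (hd : 0 < d)
    (f : Fin n → EuclideanSpace ℝ (Fin d) → ℝ)
    (Lξ σξ μs ηw : ℝ) (xstar : EuclideanSpace ℝ (Fin d))
    (W : Matrix (Fin n) (Fin n) ℝ)
    (α γk lam : ℕ → ℝ) (γ : ℝ)
    (x y q ex es gt gt' : ℕ → Ω → Fin n → EuclideanSpace ℝ (Fin d))
    (𝒢 : ℕ → MeasurableSpace Ω)
    -- f is μ-strongly convex with minimizer xstar; each fᵢ is Lξ-smooth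
    (hdiff : ∀ i, Differentiable ℝ (f i))
    (hLip : ∀ i a b, ‖gradient (f i) a - gradient (f i) b‖ ≤ Lξ * ‖a - b‖)
    (hμ : 0 < μs)
    (hsc : ∀ a b, fglob f b ≥
      fglob f a + ⟪gradient (fglob f) a, b - a⟫ + μs / 2 * ‖a - b‖ ^ 2)
    (hopt : gradient (fglob f) xstar = 0)
    -- Assumption 3.2: W is nonnegative doubly stochastic, with spectral gap ηw
    (hWnn : ∀ i j, 0 ≤ W i j)
    (hWrow : ∀ i, ∑ j, W i j = 1) (hWcol : ∀ j, ∑ i, W i j = 1)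
    (hηw : ηw ∈ Set.Ioc (0 : ℝ) 1)
    (hspec : ∀ c ∈ Set.Icc (0 : ℝ) 1, ∀ v : Fin n → ℝ,
      ∑ i, (∑ j, (mixW W c i j - (n : ℝ)⁻¹) * v j) ^ 2
        ≤ (1 - c * ηw) ^ 2 * ∑ i, (v i) ^ 2)
    -- algorithm parameters
    (hα : ∀ k, 0 < α k) (hγk : ∀ k, γk k ∈ Set.Ioc (0 : ℝ) 1)
    (hlam : ∀ k, lam k ∈ Set.Ioc (0 : ℝ) 1) (hγ : γ ∈ Set.Ioc (0 : ℝ) 1)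
    -- stochastic gradient oracle (Assumption 3.4): `gt k` is the stochastic gradient
    -- matrix `g̃_k` and `gt' (k+1)` the matrix `g̃'_{k+1}`, sampled independently of
    -- the history σ-algebra `𝒢 k` generated up to the computation of `x_{k+1}`
    (h𝒢 : ∀ k, 𝒢 k ≤ m0)
    (hmx : ∀ k, Measurable[𝒢 k] (x k)) (hmx' : ∀ k, Measurable[𝒢 k] (x (k + 1)))
    (hmq : ∀ k, Measurable[𝒢 k] (q k))
    (hunb : ∀ k i, μ[fun ω => gt k ω i | 𝒢 k]
      =ᵐ[μ] fun ω => gradient (f i) (x k ω i))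
    (hunb' : ∀ k i, μ[fun ω => gt' (k + 1) ω i | 𝒢 k]
      =ᵐ[μ] fun ω => gradient (f i) (x (k + 1) ω i))
    (hvar : ∀ k i, ∫ ω, ‖gt k ω i - gradient (f i) (x k ω i)‖ ^ 2 ∂μ ≤ σξ ^ 2)
    (hvar' : ∀ k i,
      ∫ ω, ‖gt' (k + 1) ω i - gradient (f i) (x (k + 1) ω i)‖ ^ 2 ∂μ ≤ σξ ^ 2)
    (hLms : ∀ k i, ∫ ω, ‖gt' (k + 1) ω i - gt k ω i‖ ^ 2 ∂μ
      ≤ Lξ ^ 2 * ∫ ω, ‖x (k + 1) ω i - x k ω i‖ ^ 2 ∂μ)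
    -- VRA-DSGT recursions
    (hxrec : ∀ k, 1 ≤ k → ∀ ω i, x (k + 1) ω i
      = wmul (mixW W (γk k)) (x k ω) i + γk k • ex k ω i - α k • y k ω i)
    (hqrec : ∀ k, 1 ≤ k → ∀ ω i, q (k + 1) ω i
      = (1 - lam k) • (q k ω i - gt k ω i) + gt' (k + 1) ω i)
    (hyrec : ∀ k, 1 ≤ k → ∀ ω i, y (k + 1) ω i
      = wmul (mixW W γ) (y k ω) i
        + (q (k + 1) ω i + γ • es (k + 1) ω i) - (q k ω i + γ • es k ω i))
    (hy1 : ∀ ω, rowAvg (y 1 ω) = rowAvg (gmat f (x 1 ω))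
      + rowAvg (eqerr f (q 1 ω) (x 1 ω)) + γ • rowAvg (es 1 ω))
    -- integrability of all second moments involved
    (hIy : ∀ k, Integrable (fun ω => dev2 (y k ω)) μ)
    (hIx : ∀ k, Integrable (fun ω => dev2 (x k ω)) μ)
    (hIopt : ∀ k, Integrable (fun ω => ‖rowAvg (x k ω) - xstar‖ ^ 2) μ)
    (hIex : ∀ k, Integrable (fun ω => fro2 (ex k ω)) μ)
    (hIes : ∀ k, Integrable (fun ω => fro2 (es k ω)) μ)
    (hIeq : ∀ k, Integrable (fun ω => fro2 (eqerr f (q k ω) (x k ω))) μ) :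
    ∀ k, 1 ≤ k → ∀ ε₁ ε₂ : ℝ, 0 < ε₁ → 0 < ε₂ →
      ∫ ω, ‖rowAvg (x (k + 1) ω) - xstar‖ ^ 2 ∂μ
        ≤ (1 - μs * α k + γk k / ε₁ + α k / ε₂ + 8 * Lξ ^ 2 * α k ^ 2) *
            ∫ ω, ‖rowAvg (x k ω) - xstar‖ ^ 2 ∂μ
          + (3 * α k * ε₂ + 8 * α k ^ 2) * Lξ ^ 2 / n * ∫ ω, dev2 (x k ω) ∂μ
          + (3 * α k * ε₂ + 8 * α k ^ 2) / n *
              ∫ ω, fro2 (eqerr f (q k ω) (x k ω)) ∂μ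
          + γ ^ 2 * (3 * α k * ε₂ + 8 * α k ^ 2) / n * ∫ ω, fro2 (es k ω) ∂μ
          + (ε₁ * γk k + 2 * γk k ^ 2) / n * ∫ ω, fro2 (ex k ω) ∂μ := by
  intro k hk ε₁ ε₂ hε₁ hε₂
  have hγp : 0 < γk k := (hγk k).1
  have hqbar : ∀ j (ω : Ω),
      rowAvg (gmat f (x j ω)) + rowAvg (eqerr f (q j ω) (x j ω)) = rowAvg (q j ω) := by
    intro j ω
    have h1 : (fun i => gmat f (x j ω) i + eqerr f (q j ω) (x j ω) i) = q j ω := by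
      funext i; simp [gmat, eqerr]
    rw [← rowAvg_add, h1]
  have hybar : ∀ j, 1 ≤ j → ∀ ω, rowAvg (y j ω)
      = rowAvg (q j ω) + γ • rowAvg (es j ω) := by
    intro j hj
    induction j, hj using Nat.le_induction with
    | base =>
      intro ω
      rw [hy1 ω, hqbar 1 ω]
    | succ j hj ih =>
      intro ω
      have hfun : y (j+1) ω = fun i => wmul (mixW W γ) (y j ω) i
          + (q (j+1) ω i + γ • es (j+1) ω i) - (q j ω i + γ • es j ω i) :=
        funext fun i => hyrec j hj ω i
      rw [hfun, rowAvg_sub, rowAvg_add, rowAvg_add, rowAvg_add, rowAvg_smul,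
        rowAvg_smul, rowAvg_wmul _ (mixW_col W hWcol γ), ih ω]
      abel
  have hxbar : ∀ ω, rowAvg (x (k+1) ω)
      = rowAvg (x k ω) + γk k • rowAvg (ex k ω) - α k • rowAvg (y k ω) := by
    intro ω
    have hfun : x (k+1) ω = fun i => wmul (mixW W (γk k)) (x k ω) i
        + γk k • ex k ω i - α k • y k ω i := funext fun i => hxrec k hk ω i
    rw [hfun, rowAvg_sub, rowAvg_add, rowAvg_smul, rowAvg_smul,
      rowAvg_wmul _ (mixW_col W hWcol (γk k))]
  have hpt : ∀ ω, ‖rowAvg (x (k+1) ω) - xstar‖^2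
      ≤ (1 - μs * α k + γk k / ε₁ + α k / ε₂ + 8 * Lξ ^ 2 * α k ^ 2) *
          ‖rowAvg (x k ω) - xstar‖^2
        + (3 * α k * ε₂ + 8 * α k ^ 2) * Lξ ^ 2 / n * dev2 (x k ω)
        + (3 * α k * ε₂ + 8 * α k ^ 2) / n * fro2 (eqerr f (q k ω) (x k ω))
        + γ ^ 2 * (3 * α k * ε₂ + 8 * α k ^ 2) / n * fro2 (es k ω)
        + (ε₁ * γk k + 2 * γk k ^ 2) / n * fro2 (ex k ω) := by
    intro ω
    refine pointwise_bound hn f hdiff Lξ μs xstar hLip hμ hsc hopt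
      (x k ω) (q k ω) (ex k ω) (es k ω) (α k) (γk k) γ ε₁ ε₂ (hα k) hγp hε₁ hε₂
      (rowAvg (x (k+1) ω)) ?_
    rw [hxbar ω, hybar k hk ω, ← hqbar k ω]
  have i1 := (hIopt k).const_mul
    (1 - μs * α k + γk k / ε₁ + α k / ε₂ + 8 * Lξ ^ 2 * α k ^ 2)
  have i2 := (hIx k).const_mul ((3 * α k * ε₂ + 8 * α k ^ 2) * Lξ ^ 2 / n)
  have i3 := (hIeq k).const_mul ((3 * α k * ε₂ + 8 * α k ^ 2) / n)
  have i4 := (hIes k).const_mul (γ ^ 2 * (3 * α k * ε₂ + 8 * α k ^ 2) / n)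
  have i5 := (hIex k).const_mul ((ε₁ * γk k + 2 * γk k ^ 2) / n)
  have j2 : Integrable (fun ω =>
      (1 - μs * α k + γk k / ε₁ + α k / ε₂ + 8 * Lξ ^ 2 * α k ^ 2) *
        ‖rowAvg (x k ω) - xstar‖^2
      + (3 * α k * ε₂ + 8 * α k ^ 2) * Lξ ^ 2 / n * dev2 (x k ω)) μ := i1.add i2
  have j3 : Integrable (fun ω =>
      (1 - μs * α k + γk k / ε₁ + α k / ε₂ + 8 * Lξ ^ 2 * α k ^ 2) *
        ‖rowAvg (x k ω) - xstar‖^2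
      + (3 * α k * ε₂ + 8 * α k ^ 2) * Lξ ^ 2 / n * dev2 (x k ω)
      + (3 * α k * ε₂ + 8 * α k ^ 2) / n * fro2 (eqerr f (q k ω) (x k ω))) μ :=
    j2.add i3
  have j4 : Integrable (fun ω =>
      (1 - μs * α k + γk k / ε₁ + α k / ε₂ + 8 * Lξ ^ 2 * α k ^ 2) *
        ‖rowAvg (x k ω) - xstar‖^2
      + (3 * α k * ε₂ + 8 * α k ^ 2) * Lξ ^ 2 / n * dev2 (x k ω)
      + (3 * α k * ε₂ + 8 * α k ^ 2) / n * fro2 (eqerr f (q k ω) (x k ω))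
      + γ ^ 2 * (3 * α k * ε₂ + 8 * α k ^ 2) / n * fro2 (es k ω)) μ := j3.add i4
  calc ∫ ω, ‖rowAvg (x (k + 1) ω) - xstar‖ ^ 2 ∂μ
      ≤ ∫ ω, ((1 - μs * α k + γk k / ε₁ + α k / ε₂ + 8 * Lξ ^ 2 * α k ^ 2) *
            ‖rowAvg (x k ω) - xstar‖^2
          + (3 * α k * ε₂ + 8 * α k ^ 2) * Lξ ^ 2 / n * dev2 (x k ω)
          + (3 * α k * ε₂ + 8 * α k ^ 2) / n * fro2 (eqerr f (q k ω) (x k ω))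
          + γ ^ 2 * (3 * α k * ε₂ + 8 * α k ^ 2) / n * fro2 (es k ω)
          + (ε₁ * γk k + 2 * γk k ^ 2) / n * fro2 (ex k ω)) ∂μ :=
        integral_mono_of_nonneg (ae_of_all μ fun ω => sq_nonneg _)
          (j4.add i5) (ae_of_all μ hpt)
    _ = (1 - μs * α k + γk k / ε₁ + α k / ε₂ + 8 * Lξ ^ 2 * α k ^ 2) *
            ∫ ω, ‖rowAvg (x k ω) - xstar‖ ^ 2 ∂μ
          + (3 * α k * ε₂ + 8 * α k ^ 2) * Lξ ^ 2 / n * ∫ ω, dev2 (x k ω) ∂μ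
          + (3 * α k * ε₂ + 8 * α k ^ 2) / n *
              ∫ ω, fro2 (eqerr f (q k ω) (x k ω)) ∂μ
          + γ ^ 2 * (3 * α k * ε₂ + 8 * α k ^ 2) / n * ∫ ω, fro2 (es k ω) ∂μ
          + (ε₁ * γk k + 2 * γk k ^ 2) / n * ∫ ω, fro2 (ex k ω) ∂μ := by
        rw [integral_add j4 i5, integral_add j3 i4, integral_add j2 i3,
          integral_add i1 i2, integral_const_mul, integral_const_mul,
          integral_const_mul, integral_const_mul, integral_const_mul]

end
end

section
/- Consensus contraction of the tracker (inequality (y-bound), pointwise form): suppose y_{k+1} = W_γ·y_k + (g_{k+1} + γ·e^s_{k+1}) − (g_k + γ·e^s_k), where W_γ := (1−γ)·I + γ·W with W doubly stochastic, γη_w ∈ (0,1), and the operator 2-norm satisfies ‖W_γ − (1/n)·1·1ᵀ‖₂ ≤ 1 − γη_w. Then ‖y_{k+1} − 𝐲̄_{k+1}‖² ≤ (1 − γη_w)·‖y_k − 𝐲̄_k‖² + (2/(γη_w))·‖g_{k+1} − g_k‖² + (2/(γη_w))·γ²·‖e^s_{k+1} − e^s_k‖². -/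
open MeasureTheory Finset
open scoped RealInnerProductSpace

noncomputable section

variable {n d : ℕ}

lemma enorm_sq (x : EuclideanSpace ℝ (Fin d)) : ‖x‖ ^ 2 = ∑ t, x t ^ 2 := by
  rw [EuclideanSpace.norm_eq, Real.sq_sqrt (by positivity)]
  simp [sq_abs]

lemma esum_apply (u : Fin n → EuclideanSpace ℝ (Fin d)) (t : Fin d) :
    (∑ j, u j) t = ∑ j, u j t := by
  rw [WithLp.ofLp_sum]; exact Finset.sum_apply t Finset.univ _

lemma spec_vec (C : Matrix (Fin n) (Fin n) ℝ) (r : ℝ)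
    (h : ∀ v : Fin n → ℝ, ∑ i, (∑ j, C i j * v j) ^ 2 ≤ r * ∑ i, v i ^ 2)
    (u : Fin n → EuclideanSpace ℝ (Fin d)) :
    ∑ i, ‖∑ j, C i j • u j‖ ^ 2 ≤ r * ∑ i, ‖u i‖ ^ 2 := by
  calc ∑ i, ‖∑ j, C i j • u j‖ ^ 2 = ∑ i, ∑ t, (∑ j, C i j * u j t) ^ 2 := by
        refine Finset.sum_congr rfl fun i _ => ?_
        rw [enorm_sq]
        refine Finset.sum_congr rfl fun t _ => ?_
        rw [esum_apply]
        rfl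
    _ = ∑ t, ∑ i, (∑ j, C i j * u j t) ^ 2 := Finset.sum_comm
    _ ≤ ∑ t : Fin d, r * ∑ j, (u j t) ^ 2 := Finset.sum_le_sum fun t _ => h _
    _ = r * ∑ j, ‖u j‖ ^ 2 := by
        rw [← Finset.mul_sum, Finset.sum_comm]
        congr 1
        exact Finset.sum_congr rfl fun j _ => (enorm_sq _).symm

lemma dev2_le_fro2 (hn : 0 < n) (A : Fin n → EuclideanSpace ℝ (Fin d)) :
    dev2 A ≤ fro2 A := by
  have hne : (n : ℝ) ≠ 0 := by positivity
  set m := rowAvg A with hm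
  have hsum : ∑ i, A i = (n : ℝ) • m := by
    rw [hm, rowAvg, smul_smul, mul_inv_cancel₀ hne, one_smul]
  have hexp : ∀ i, ‖A i - m‖ ^ 2 = ‖A i‖ ^ 2 - 2 * ⟪A i, m⟫ + ‖m‖ ^ 2 :=
    fun i => norm_sub_sq_real _ _
  have hdev : dev2 A = fro2 A - (n : ℝ) * ‖m‖ ^ 2 := by
    unfold dev2 fro2
    rw [Finset.sum_congr rfl fun i _ => hexp i]
    rw [Finset.sum_add_distrib, Finset.sum_sub_distrib, Finset.sum_const,
      Finset.card_univ, Fintype.card_fin]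
    have hinner : ∑ i, 2 * ⟪A i, m⟫ = 2 * ((n : ℝ) * ‖m‖ ^ 2) := by
      rw [← Finset.mul_sum, ← sum_inner, hsum, real_inner_smul_left,
        real_inner_self_eq_norm_sq]
    rw [hinner]
    push_cast
    ring
  rw [hdev]
  have : 0 ≤ (n : ℝ) * ‖m‖ ^ 2 := by positivity
  linarith

lemma young_sq (a b c : ℝ) (ha : 0 ≤ a) (hb : 0 ≤ b) (hc : 0 < c) :
    (a + b) ^ 2 ≤ (1 + c) * a ^ 2 + (1 + 1 / c) * b ^ 2 := by
  have h1 : c * (1 / c) = 1 := mul_one_div_cancel hc.ne'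
  nlinarith [sq_nonneg (c * a - b), sq_nonneg a, sq_nonneg b, hc.le]

/-- **Consensus contraction of the tracker (inequality (y-bound), pointwise
form)**. -/
theorem tracker_consensus_contraction
    (hn : 0 < n) (hd : 0 < d)
    (W : Matrix (Fin n) (Fin n) ℝ)
    (hWnn : ∀ i j, 0 ≤ W i j)
    (hWrow : ∀ i, ∑ j, W i j = 1) (hWcol : ∀ j, ∑ i, W i j = 1)
    (γ ηw : ℝ) (hγ : γ ∈ Set.Ioc (0 : ℝ) 1) (hηw : ηw ∈ Set.Ioc (0 : ℝ) 1)
    (hγηw : γ * ηw < 1)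
    (hspec : ∀ v : Fin n → ℝ,
      ∑ i, (∑ j, (mixW W γ i j - (n : ℝ)⁻¹) * v j) ^ 2
        ≤ (1 - γ * ηw) ^ 2 * ∑ i, (v i) ^ 2)
    (yk yk' g g' es es' : Fin n → EuclideanSpace ℝ (Fin d))
    (hyrec : ∀ i, yk' i
      = wmul (mixW W γ) yk i + (g' i + γ • es' i) - (g i + γ • es i)) :
    dev2 yk' ≤ (1 - γ * ηw) * dev2 yk
      + 2 / (γ * ηw) * fro2 (fun i => g' i - g i)
      + 2 / (γ * ηw) * γ ^ 2 * fro2 (fun i => es' i - es i) := by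
  obtain ⟨hγ0, hγ1⟩ := hγ
  obtain ⟨hη0, hη1⟩ := hηw
  have hρ0 : 0 < γ * ηw := mul_pos hγ0 hη0
  have hρ1 : γ * ηw < 1 := hγηw
  have hne : (n : ℝ) ≠ 0 := by positivity
  set M := mixW W γ with hM
  have hMrow : ∀ i, ∑ j, M i j = 1 := by
    intro i
    simp only [hM, mixW, Matrix.add_apply, Matrix.smul_apply, smul_eq_mul,
      Finset.sum_add_distrib, ← Finset.mul_sum, hWrow i]
    simp [Matrix.one_apply]
  have hMcol : ∀ j, ∑ i, M i j = 1 := by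
    intro j
    simp only [hM, mixW, Matrix.add_apply, Matrix.smul_apply, smul_eq_mul,
      Finset.sum_add_distrib, ← Finset.mul_sum, hWcol j]
    simp [Matrix.one_apply]
  set Δ : Fin n → EuclideanSpace ℝ (Fin d) :=
    fun i => (g' i - g i) + γ • (es' i - es i) with hΔ
  have hyrec' : ∀ i, yk' i = wmul M yk i + Δ i := by
    intro i
    rw [hyrec i]
    simp only [hΔ, smul_sub]
    abel
  have hwsum : ∑ i, wmul M yk i = ∑ j, yk j := by
    unfold wmul
    rw [Finset.sum_comm]
    refine Finset.sum_congr rfl fun j _ => ?_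
    rw [← Finset.sum_smul, hMcol j, one_smul]
  have havg' : rowAvg yk' = rowAvg yk + rowAvg Δ := by
    unfold rowAvg
    rw [Finset.sum_congr rfl fun i _ => hyrec' i, Finset.sum_add_distrib, hwsum, smul_add]
  have key : ∀ i, yk' i - rowAvg yk' =
      (∑ j, (M i j - (n : ℝ)⁻¹) • (yk j - rowAvg yk)) + (Δ i - rowAvg Δ) := by
    intro i
    have h1 : ∑ j, (M i j - (n : ℝ)⁻¹) • (yk j - rowAvg yk)
        = wmul M yk i - rowAvg yk := by
      have e1 : ∀ j, (M i j - (n : ℝ)⁻¹) • (yk j - rowAvg yk)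
          = M i j • yk j - M i j • rowAvg yk - (n : ℝ)⁻¹ • yk j
            + (n : ℝ)⁻¹ • rowAvg yk := by
        intro j; rw [sub_smul, smul_sub, smul_sub]; abel
      rw [Finset.sum_congr rfl fun j _ => e1 j, Finset.sum_add_distrib,
        Finset.sum_sub_distrib, Finset.sum_sub_distrib, ← Finset.sum_smul,
        hMrow i, one_smul, Finset.sum_const, Finset.card_univ, Fintype.card_fin]
      have h2 : n • ((n : ℝ)⁻¹ • rowAvg yk) = rowAvg yk := by
        rw [← Nat.cast_smul_eq_nsmul ℝ, smul_smul, mul_inv_cancel₀ hne, one_smul]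
      have h3 : ∑ j, (n : ℝ)⁻¹ • yk j = rowAvg yk := by
        rw [← Finset.smul_sum, rowAvg]
      rw [h2, h3]
      show (∑ j, M i j • yk j) - rowAvg yk - rowAvg yk + rowAvg yk = wmul M yk i - rowAvg yk
      unfold wmul
      abel
    rw [h1, hyrec' i, havg']
    abel
  set c : ℝ := (γ * ηw) / (1 - γ * ηw) with hc
  have hcpos : 0 < c := div_pos hρ0 (by linarith)
  set P : Fin n → EuclideanSpace ℝ (Fin d) :=
    fun i => ∑ j, (M i j - (n : ℝ)⁻¹) • (yk j - rowAvg yk) with hPdef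
  set Q : Fin n → EuclideanSpace ℝ (Fin d) := fun i => Δ i - rowAvg Δ with hQdef
  have step1 : dev2 yk' ≤ (1 + c) * (∑ i, ‖P i‖ ^ 2) + (1 + 1 / c) * (∑ i, ‖Q i‖ ^ 2) := by
    unfold dev2
    calc ∑ i, ‖yk' i - rowAvg yk'‖ ^ 2 = ∑ i, ‖P i + Q i‖ ^ 2 :=
          Finset.sum_congr rfl fun i _ => by rw [key i]
      _ ≤ ∑ i, ((1 + c) * ‖P i‖ ^ 2 + (1 + 1 / c) * ‖Q i‖ ^ 2) := by
          refine Finset.sum_le_sum fun i _ => ?_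
          calc ‖P i + Q i‖ ^ 2 ≤ (‖P i‖ + ‖Q i‖) ^ 2 := by
                have h := norm_add_le (P i) (Q i)
                nlinarith [norm_nonneg (P i + Q i), norm_nonneg (P i), norm_nonneg (Q i)]
            _ ≤ _ := young_sq _ _ c (norm_nonneg _) (norm_nonneg _) hcpos
      _ = _ := by rw [Finset.sum_add_distrib, Finset.mul_sum, Finset.mul_sum]
  have hP : ∑ i, ‖P i‖ ^ 2 ≤ (1 - γ * ηw) ^ 2 * dev2 yk := by
    unfold dev2
    exact spec_vec (fun i j => M i j - (n : ℝ)⁻¹) ((1 - γ * ηw) ^ 2) hspec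
      (fun j => yk j - rowAvg yk)
  have hQ : ∑ i, ‖Q i‖ ^ 2 ≤ 2 * fro2 (fun i => g' i - g i)
      + 2 * γ ^ 2 * fro2 (fun i => es' i - es i) := by
    have h2 : dev2 Δ ≤ fro2 Δ := dev2_le_fro2 hn Δ
    have h3 : fro2 Δ ≤ 2 * fro2 (fun i => g' i - g i)
        + 2 * γ ^ 2 * fro2 (fun i => es' i - es i) := by
      unfold fro2
      rw [Finset.mul_sum, Finset.mul_sum, ← Finset.sum_add_distrib]
      refine Finset.sum_le_sum fun i _ => ?_
      have htr := norm_add_le (g' i - g i) (γ • (es' i - es i))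
      have hns : ‖γ • (es' i - es i)‖ = γ * ‖es' i - es i‖ := by
        rw [norm_smul, Real.norm_eq_abs, abs_of_pos hγ0]
      rw [hns] at htr
      have hΔi : ‖Δ i‖ ≤ ‖g' i - g i‖ + γ * ‖es' i - es i‖ := htr
      nlinarith [norm_nonneg (g' i - g i), norm_nonneg (es' i - es i),
        norm_nonneg (Δ i), sq_nonneg (‖g' i - g i‖ - γ * ‖es' i - es i‖)]
    have hQeq : ∑ i, ‖Q i‖ ^ 2 = dev2 Δ := by
      unfold dev2
      exact Finset.sum_congr rfl fun i _ => by rw [hQdef]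
    rw [hQeq]
    exact le_trans h2 h3
  have hden : (1 : ℝ) - γ * ηw ≠ 0 := by linarith
  have hρne : γ * ηw ≠ 0 := hρ0.ne'
  have e1 : (1 + c) * (1 - γ * ηw) ^ 2 = 1 - γ * ηw := by
    rw [hc]
    field_simp
    ring
  have e2 : 1 + 1 / c = 1 / (γ * ηw) := by
    rw [hc, one_div_div]
    field_simp
    ring
  have hPc : (1 + c) * (∑ i, ‖P i‖ ^ 2) ≤ (1 - γ * ηw) * dev2 yk := by
    have := mul_le_mul_of_nonneg_left hP (by positivity : (0:ℝ) ≤ 1 + c)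
    calc (1 + c) * (∑ i, ‖P i‖ ^ 2) ≤ (1 + c) * ((1 - γ * ηw) ^ 2 * dev2 yk) := this
      _ = (1 - γ * ηw) * dev2 yk := by rw [← mul_assoc, e1]
  have hQc : (1 + 1 / c) * (∑ i, ‖Q i‖ ^ 2)
      ≤ 2 / (γ * ηw) * fro2 (fun i => g' i - g i)
        + 2 / (γ * ηw) * γ ^ 2 * fro2 (fun i => es' i - es i) := by
    have h0 : (0:ℝ) ≤ 1 + 1 / c := by positivity
    have := mul_le_mul_of_nonneg_left hQ h0
    calc (1 + 1 / c) * (∑ i, ‖Q i‖ ^ 2)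
        ≤ (1 + 1 / c) * (2 * fro2 (fun i => g' i - g i)
            + 2 * γ ^ 2 * fro2 (fun i => es' i - es i)) := this
      _ = _ := by rw [e2]; field_simp
  linarith only [step1, hPc, hQc]


end
end
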